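/- Let a > 0 and let F : ℝ⁴ → ℝ⁴ be the vector field F(q₁, q₂, v₁, v₂) = (v₁, v₂, −2q₁ + q₂ + q₂² − 2q₁q₂, a(−2q₂ + q₁ + 2q₁q₂ − q₁²)). The Jacobian matrix of F at the equilibrium (1, 2, 0, 0) has characteristic polynomial X⁴ + 6X² − 9a; its eigenvalues are the real pair ±√(3(√(1+a) − 1)) and the purely imaginary pair ±i√(3(√(1+a) + 1)). In particular √(3(√(1+a) − 1)) > 0 is a real positive eigenvalue, so the equilibrium (1, 2) is linearly unstable, with one stable, one unstable and a two-dimensional centre direction. -/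

import Mathlib

open Polynomial

/-- The vector field `F(q₁, q₂, v₁, v₂) =
(v₁, v₂, -2q₁ + q₂ + q₂² - 2q₁q₂, a(-2q₂ + q₁ + 2q₁q₂ - q₁²))` on ℝ⁴ governing
the symmetric invariant manifold of the 6-particle alternating FPU α-chain
(α = 1, m = 1/a). -/
def fpuField (a : ℝ) (x : Fin 4 → ℝ) : Fin 4 → ℝ :=
  ![x 2, x 3,
    -2 * x 0 + x 1 + (x 1) ^ 2 - 2 * x 0 * x 1,
    a * (-2 * x 1 + x 0 + 2 * x 0 * x 1 - (x 0) ^ 2)]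

/-- The Jacobian matrix of a map `ℝ⁴ → ℝ⁴` at the point `x`. -/
noncomputable def jacobian (F : (Fin 4 → ℝ) → Fin 4 → ℝ) (x : Fin 4 → ℝ) :
    Matrix (Fin 4) (Fin 4) ℝ :=
  Matrix.of fun i j => fderiv ℝ F x (Pi.single j 1) i

/-!
The Jacobian at the equilibrium `(1, 2, 0, 0)` is the first-order form of the linear system
`q̈ = K q` with `K = !![-6, 3; 3a, 0]`, so its characteristic polynomial is
`det (X² - K) = X⁴ + 6X² - 9a`. As a quadratic in `X²` this has roots `X² = r` and `X² = -s`
with `r = 3(√(1+a) - 1) > 0` and `s = 3(√(1+a) + 1)`, since `s - r = 6` and `r s = 9a`;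
hence the real pair `±√r` and the imaginary pair `±i√s`.
-/

theorem fpuField_one_two (a : ℝ) : fpuField a ![1, 2, 0, 0] = 0 := by
  simp [fpuField]
  norm_num

theorem HasFDerivAt.jacobian_eq {F : (Fin 4 → ℝ) → Fin 4 → ℝ} {x : Fin 4 → ℝ}
    {M : Matrix (Fin 4) (Fin 4) ℝ}
    (h : HasFDerivAt F (Matrix.toLin' M).toContinuousLinearMap x) :
    jacobian F x = M := by
  ext i j
  simp [jacobian, h.fderiv, Matrix.mulVec_single]

def fpuJacobian (a : ℝ) (x : Fin 4 → ℝ) : Matrix (Fin 4) (Fin 4) ℝ :=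
  !![0, 0, 1, 0;
     0, 0, 0, 1;
     -2 - 2 * x 1, 1 + 2 * x 1 - 2 * x 0, 0, 0;
     a * (1 + 2 * x 1 - 2 * x 0), a * (2 * x 0 - 2), 0, 0]

theorem hasFDerivAt_fpuField (a : ℝ) (x : Fin 4 → ℝ) :
    HasFDerivAt (fpuField a) (Matrix.toLin' (fpuJacobian a x)).toContinuousLinearMap x := by
  have h0 := hasFDerivAt_apply (𝕜 := ℝ) 0 x
  have h1 := hasFDerivAt_apply (𝕜 := ℝ) 1 x
  refine hasFDerivAt_pi'' fun i => ?_
  fin_cases i <;> dsimp [fpuField]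
  · refine (hasFDerivAt_apply 2 x).congr_fderiv ?_
    ext v; simp [fpuJacobian, dotProduct, Fin.sum_univ_four]
  · refine (hasFDerivAt_apply 3 x).congr_fderiv ?_
    ext v; simp [fpuJacobian, dotProduct, Fin.sum_univ_four]
  · refine (((h0.const_mul (-2)).add h1).add (h1.pow 2)).sub ((h0.const_mul 2).mul h1)
      |>.congr_fderiv ?_
    ext v; simp [fpuJacobian, dotProduct, Fin.sum_univ_four]; ring
  · refine (((h1.const_mul (-2)).add h0).add ((h0.const_mul 2).mul h1)).sub (h0.pow 2)
      |>.const_mul a |>.congr_fderiv ?_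
    ext v; simp [fpuJacobian, dotProduct, Fin.sum_univ_four]; ring

theorem charpoly_secondOrderLinearization {R : Type*} [CommRing R] (k₀₀ k₀₁ k₁₀ k₁₁ : R) :
    (!![0, 0, 1, 0; 0, 0, 0, 1; k₀₀, k₀₁, 0, 0; k₁₀, k₁₁, 0, 0] :
      Matrix (Fin 4) (Fin 4) R).charpoly =
      X ^ 4 - C (k₀₀ + k₁₁) * X ^ 2 + C (k₀₀ * k₁₁ - k₀₁ * k₁₀) := by
  simp [Matrix.charpoly, Matrix.det_succ_row_zero, Fin.sum_univ_succ,
    Matrix.charmatrix_apply, Fin.succAbove]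
  ring

theorem roots_X_sq_sub_C_sq {R : Type*} [CommRing R] [IsDomain R] (z : R) :
    (X ^ 2 - C (z ^ 2)).roots = {z, -z} := by
  have hfactor : (X ^ 2 - C (z ^ 2) : R[X]) = (X - C z) * (X - C (-z)) := by
    simp only [map_neg, map_pow]
    ring
  rw [hfactor, roots_mul ((monic_X_sub_C z).mul (monic_X_sub_C (-z))).ne_zero,
    roots_X_sub_C, roots_X_sub_C, Multiset.singleton_add]
  rfl

theorem roots_map_X_sq_sub_C_sq_mul_X_sq_add_C_sq (u v : ℝ) :
    (((X ^ 2 - C (u ^ 2)) * (X ^ 2 + C (v ^ 2)) : ℝ[X]).map (algebraMap ℝ ℂ)).roots =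
      {(u : ℂ), -(u : ℂ), Complex.I * v, -(Complex.I * v)} := by
  have hmap : ((X ^ 2 - C (u ^ 2)) * (X ^ 2 + C (v ^ 2)) : ℝ[X]).map (algebraMap ℝ ℂ) =
      (X ^ 2 - C ((u : ℂ) ^ 2)) * (X ^ 2 - C ((Complex.I * v) ^ 2)) := by
    simp [mul_pow]
  have hmonic : ∀ c : ℂ, (X ^ 2 - C c).Monic := fun c => monic_X_pow_sub_C c two_ne_zero
  rw [hmap, roots_mul ((hmonic _).mul (hmonic _)).ne_zero, roots_X_sq_sub_C_sq,
    roots_X_sq_sub_C_sq]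
  rfl

theorem X_pow_four_add_six_mul_X_sq_sub_nine_mul_eq {a : ℝ} (ha : 0 ≤ a) :
    (X ^ 4 + C 6 * X ^ 2 - C (9 * a) : ℝ[X]) =
      (X ^ 2 - C (√(3 * (√(1 + a) - 1)) ^ 2)) * (X ^ 2 + C (√(3 * (√(1 + a) + 1)) ^ 2)) := by
  have hroot : 1 ≤ √(1 + a) := Real.one_le_sqrt.2 (by linarith)
  rw [Real.sq_sqrt (by linarith), Real.sq_sqrt (by linarith)]
  have h9a : 9 * a = 9 * (√(1 + a) ^ 2 - 1) := by rw [Real.sq_sqrt (by linarith)]; ring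
  rw [h9a]
  simp only [map_mul, map_sub, map_add, map_pow, map_one, map_ofNat]
  ring

/-- At the equilibrium `(1, 2, 0, 0)` of the vector field `F`, the Jacobian has
characteristic polynomial `X⁴ + 6X² - 9a`, whose (complex) roots, i.e. the
eigenvalues, are the real pair `±√(3(√(1+a) - 1))` and the purely imaginary
pair `±i√(3(√(1+a) + 1))`; in particular `√(3(√(1+a) - 1)) > 0` is a real
positive eigenvalue, so the equilibrium `(1, 2)` is linearly unstable, with one
stable, one unstable and a two-dimensional centre direction. -/
theorem jacobian_at_one_two (a : ℝ) (ha : 0 < a) :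
    fpuField a ![1, 2, 0, 0] = 0 ∧
    (jacobian (fpuField a) ![1, 2, 0, 0]).charpoly =
      X ^ 4 + C 6 * X ^ 2 - C (9 * a) ∧
    ((jacobian (fpuField a) ![1, 2, 0, 0]).charpoly.map (algebraMap ℝ ℂ)).roots =
      {((Real.sqrt (3 * (Real.sqrt (1 + a) - 1)) : ℝ) : ℂ),
        -((Real.sqrt (3 * (Real.sqrt (1 + a) - 1)) : ℝ) : ℂ),
        Complex.I * ((Real.sqrt (3 * (Real.sqrt (1 + a) + 1)) : ℝ) : ℂ),
        -(Complex.I * ((Real.sqrt (3 * (Real.sqrt (1 + a) + 1)) : ℝ) : ℂ))} ∧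
    0 < Real.sqrt (3 * (Real.sqrt (1 + a) - 1)) := by
  have hJ : jacobian (fpuField a) ![1, 2, 0, 0] =
      !![0, 0, 1, 0; 0, 0, 0, 1; -6, 3, 0, 0; 3 * a, 0, 0, 0] := by
    rw [(hasFDerivAt_fpuField a _).jacobian_eq, fpuJacobian]
    norm_num [mul_comm a]
  have hcp : (jacobian (fpuField a) ![1, 2, 0, 0]).charpoly =
      X ^ 4 + C 6 * X ^ 2 - C (9 * a) := by
    rw [hJ, charpoly_secondOrderLinearization, show (-6 + 0 : ℝ) = -6 by norm_num,
      show (-6 * 0 - 3 * (3 * a) : ℝ) = -(9 * a) by ring, map_neg, map_neg]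
    ring
  refine ⟨fpuField_one_two a, hcp, ?_, ?_⟩
  · rw [hcp, X_pow_four_add_six_mul_X_sq_sub_nine_mul_eq ha.le,
      roots_map_X_sq_sub_C_sq_mul_X_sq_add_C_sq]
  · have : 1 < √(1 + a) := Real.lt_sqrt zero_le_one |>.2 (by linarith)
    exact Real.sqrt_pos.2 (by linarith)
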